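/- arXiv:2212.07197 — 5 statements merged into one kernel-verified Lean document; each statement's English description precedes it below -/
import Mathlib

section
/- Let $\Delta_n \subset M_n(\mathbb{C})$ be the diagonal subalgebra, $E : M_n(\mathbb{C}) \to \Delta_n$ the trace-preserving conditional expectation (extracting the diagonal), and $U \in M_n(\mathbb{C})$ a unitary. Define $\lambda(\Delta_n, U\Delta_n U^*) = \sup\{ t \ge 0 : \mathrm{Ad}_U \circ E \circ \mathrm{Ad}_{U^*}(x) \ge t x \text{ for all positive } x \in \Delta_n \}$. Then $\lambda(\Delta_n, U\Delta_n U^*) = \min_{1 \le i \le n} h((U^*)_i)^{-1}$, where $(U^*)_i$ is the $i$-th column of $U^*$ and $h$ denotes the Hamming number (number of nonzero entries) of a vector in $\mathbb{C}^n$. -/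
open Matrix
open scoped ComplexOrder

/-!
Conjugating by `U` turns `E_{UΔU*}(x) - t x`, for `x = diag d`, into `∑ₖ dₖ (E_Δ(pₖ) - t pₖ)`,
where `pₖ = vₖ* vₖ` is the rank-one matrix built on the `k`-th row `vₖ` of `U` (the conjugate of
the `k`-th column of `U*`). The quadratic form of `E_Δ(p) - t p` for `p = v* v` at `z` is
`∑ⱼ |vⱼ zⱼ|² - t |∑ⱼ vⱼ zⱼ|²`, which is nonnegative for all `z` iff `t h(v) ≤ 1`: Cauchy–Schwarz
on the support of `v` gives one direction and `z = v⁻¹` the other. So `t` is admissible iff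
`t h(vₖ) ≤ 1` for every `k`, sufficiency by summing and necessity by taking `d` a basis vector.
-/

theorem norm_sum_sq_le_hammingNorm_mul {ι E : Type*} [Fintype ι] [SeminormedAddCommGroup E]
    [DecidableEq E] (a : ι → E) :
    ‖∑ i, a i‖ ^ 2 ≤ hammingNorm a * ∑ i, ‖a i‖ ^ 2 := by
  have hsupp : ∑ i, ‖a i‖ ^ 2 = ∑ i with a i ≠ 0, ‖a i‖ ^ 2 := by
    rw [Finset.sum_filter_of_ne]; intro i _ h; contrapose! h; simp [h]
  rw [← Finset.sum_filter_ne_zero, hsupp]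
  calc ‖∑ i with a i ≠ 0, a i‖ ^ 2 ≤ (∑ i with a i ≠ 0, ‖a i‖) ^ 2 := by
        gcongr; exact norm_sum_le _ _
    _ ≤ _ := sq_sum_le_card_mul_sum_sq

section DiagonalGap

variable {ι : Type*} [Fintype ι] [DecidableEq ι]

theorem star_dotProduct_diagonal_diag_sub_smul_vecMulVec_mulVec (v z : ι → ℂ) (t : ℝ) :
    star z ⬝ᵥ ((diagonal (vecMulVec (star v) v).diag - t • vecMulVec (star v) v) *ᵥ z)
      = ((∑ j, ‖v j * z j‖ ^ 2 - t * ‖v ⬝ᵥ z‖ ^ 2 : ℝ) : ℂ) := by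
  have hdiag : star z ⬝ᵥ (diagonal (vecMulVec (star v) v).diag *ᵥ z)
      = ∑ j, star (v j * z j) * (v j * z j) := by
    simp only [dotProduct, mulVec_diagonal, diag_apply, vecMulVec_apply, Pi.star_apply, star_mul']
    exact Finset.sum_congr rfl fun j _ => by ring
  have hrank : star z ⬝ᵥ (vecMulVec (star v) v *ᵥ z) = star (v ⬝ᵥ z) * (v ⬝ᵥ z) := by
    rw [vecMulVec_mulVec, dotProduct_smul, ← star_dotProduct_star, MulOpposite.smul_eq_mul_unop]
    rfl
  rw [sub_mulVec, dotProduct_sub, smul_mulVec, dotProduct_smul, hdiag, hrank]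
  simp only [Complex.star_def, Complex.conj_mul', Complex.real_smul]
  push_cast
  rfl

theorem posSemidef_diagonal_diag_sub_smul_vecMulVec_iff (v : ι → ℂ) (t : ℝ) :
    (diagonal (vecMulVec (star v) v).diag - t • vecMulVec (star v) v).PosSemidef ↔
      t * hammingNorm v ≤ 1 := by
  rw [posSemidef_iff_dotProduct_mulVec]
  simp only [star_dotProduct_diagonal_diag_sub_smul_vecMulVec_mulVec, Complex.zero_le_real,
    sub_nonneg]
  constructor
  · rintro ⟨-, hq⟩
    -- test against `z = v⁻¹` (with `0⁻¹ = 0`), so that `v j * z j` is `1` on the support of `v`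
    have hone : ∀ j, v j * (v j)⁻¹ = if v j = 0 then 0 else 1 := fun j => by
      split_ifs with h <;> simp [h]
    have hsum : ∑ j, ‖v j * (v j)⁻¹‖ ^ 2 = hammingNorm v := by
      simp [hone, apply_ite, hammingNorm, Finset.sum_ite, Finset.filter_not]
    have hdot : ‖v ⬝ᵥ v⁻¹‖ = hammingNorm v := by
      simp [dotProduct, hone, Finset.sum_ite, hammingNorm, Finset.filter_not]
    have h := hq v⁻¹
    simp only [Pi.inv_apply, hsum, hdot] at h
    rcases (Nat.cast_nonneg (α := ℝ) (hammingNorm v)).eq_or_lt with h0 | hpos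
    · simp [← h0]
    · nlinarith
  · intro ht
    refine ⟨?_, fun z => ?_⟩
    · refine IsHermitian.sub ?_ ((posSemidef_vecMulVec_star_self v).isHermitian.smul ?_)
      · refine isHermitian_diagonal_of_self_adjoint _ (funext fun j => ?_)
        simp [vecMulVec_apply, mul_comm]
      · exact IsSelfAdjoint.all t
    · have hcs : ‖v ⬝ᵥ z‖ ^ 2 ≤ hammingNorm v * ∑ j, ‖v j * z j‖ ^ 2 :=
        (norm_sum_sq_le_hammingNorm_mul _).trans <| by
          gcongr
          exact hammingNorm_comp_le_hammingNorm (fun j a => a * z j) (fun j => zero_mul _)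
      rcases le_or_gt t 0 with ht0 | ht0
      · exact (mul_nonpos_of_nonpos_of_nonneg ht0 (by positivity)).trans (by positivity)
      · calc t * ‖v ⬝ᵥ z‖ ^ 2 ≤ t * hammingNorm v * ∑ j, ‖v j * z j‖ ^ 2 := by
              rw [mul_assoc]; gcongr
          _ ≤ ∑ j, ‖v j * z j‖ ^ 2 := mul_le_of_le_one_left (by positivity) ht

theorem conjTranspose_mul_diagonal_mul_eq_sum (U : Matrix ι ι ℂ) (d : ι → ℂ) :
    Uᴴ * diagonal d * U = ∑ k, d k • vecMulVec (star (U k)) (U k) := by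
  ext j l
  simp [mul_apply, diagonal_apply, Matrix.sum_apply, vecMulVec_apply]
  exact Finset.sum_congr rfl fun k _ => by ring

theorem conjTranspose_mul_sub_smul_diagonal_mul_eq_sum {U : Matrix ι ι ℂ} (hU : Uᴴ * U = 1)
    (d : ι → ℂ) (t : ℝ) :
    Uᴴ * (U * diagonal (fun i => (Uᴴ * diagonal d * U) i i) * Uᴴ - t • diagonal d) * U
      = ∑ k, d k • (diagonal (vecMulVec (star (U k)) (U k)).diag
          - t • vecMulVec (star (U k)) (U k)) := by
  have hconj : Uᴴ * (U * diagonal (Uᴴ * diagonal d * U).diag * Uᴴ - t • diagonal d) * U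
      = diagonal (Uᴴ * diagonal d * U).diag - t • (Uᴴ * diagonal d * U) := by
    rw [Matrix.mul_sub, Matrix.sub_mul, ← Matrix.mul_assoc, ← Matrix.mul_assoc, hU,
      Matrix.one_mul, Matrix.mul_assoc, hU, Matrix.mul_one, Matrix.mul_smul, Matrix.smul_mul]
  refine hconj.trans ?_
  rw [conjTranspose_mul_diagonal_mul_eq_sum]
  ext j l
  by_cases hjl : j = l <;>
    simp [hjl, Matrix.sum_apply, Finset.mul_sum, Finset.sum_sub_distrib, mul_sub, mul_left_comm]

def PimsnerPopaBound (U : Matrix ι ι ℂ) (t : ℝ) : Prop :=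
  ∀ x : Matrix ι ι ℂ, (∃ d : ι → ℂ, x = diagonal d) → x.PosSemidef →
    (U * diagonal (fun i => (Uᴴ * x * U) i i) * Uᴴ - t • x).PosSemidef

theorem pimsnerPopaBound_iff {U : Matrix ι ι ℂ} (hU : Uᴴ * U = 1) (t : ℝ) :
    PimsnerPopaBound U t ↔ ∀ i, t * hammingNorm (U i) ≤ 1 := by
  have hUunit : IsUnit U := (isUnit_iff_isUnit_det U).mpr (isUnit_det_of_left_inverse hU)
  have hconj (M : Matrix ι ι ℂ) : (Uᴴ * M * U).PosSemidef ↔ M.PosSemidef :=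
    hUunit.posSemidef_star_left_conjugate_iff
  simp only [PimsnerPopaBound, ← posSemidef_diagonal_diag_sub_smul_vecMulVec_iff]
  constructor
  · intro h i
    have hi := h (diagonal (Pi.single i 1)) ⟨_, rfl⟩
      (posSemidef_diagonal_iff.mpr (Pi.single_nonneg.mpr zero_le_one))
    rw [← hconj, conjTranspose_mul_sub_smul_diagonal_mul_eq_sum hU] at hi
    simpa [Pi.single_apply] using hi
  · rintro h x ⟨d, rfl⟩ hd
    rw [← hconj, conjTranspose_mul_sub_smul_diagonal_mul_eq_sum hU]
    exact posSemidef_sum _ fun k _ => (h k).smul (posSemidef_diagonal_iff.mp hd k)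

theorem hammingNorm_row_pos {U : Matrix ι ι ℂ} (hU : Uᴴ * U = 1) (i : ι) :
    0 < hammingNorm (U i) := by
  refine hammingNorm_pos_iff.mpr fun hi => ?_
  have h0 : U.det = 0 := det_eq_zero_of_row_eq_zero i fun j => congrFun hi j
  exact not_isUnit_zero (h0 ▸ isUnit_det_of_left_inverse hU)

end DiagonalGap

/-- The Pimsner–Popa constant of the pair of Masas `(Δₙ, UΔₙU*)` in `Mₙ(ℂ)` equals
the minimum over `i` of the reciprocal of the Hamming number of the `i`-th column
of `U*`. -/
theorem stmt3 {n : ℕ} (hn : 0 < n) (U : Matrix (Fin n) (Fin n) ℂ)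
    (hU : Uᴴ * U = 1) :
    sSup {t : ℝ | 0 ≤ t ∧ ∀ x : Matrix (Fin n) (Fin n) ℂ,
        (∃ d : Fin n → ℂ, x = Matrix.diagonal d) → x.PosSemidef →
        (U * Matrix.diagonal (fun i => (Uᴴ * x * U) i i) * Uᴴ - t • x).PosSemidef}
      = ⨅ i : Fin n, ((Nat.card {j : Fin n // Uᴴ j i ≠ 0} : ℝ))⁻¹ := by
  have : Nonempty (Fin n) := ⟨⟨0, hn⟩⟩
  have hcard (i : Fin n) : Nat.card {j : Fin n // Uᴴ j i ≠ 0} = hammingNorm (U i) := by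
    simp [Nat.card_eq_fintype_card, Fintype.card_subtype, hammingNorm, conjTranspose_apply]
  have hpos (i : Fin n) : (0 : ℝ) < hammingNorm (U i) := mod_cast hammingNorm_row_pos hU i
  have hset : {t : ℝ | 0 ≤ t ∧ PimsnerPopaBound U t}
      = Set.Icc 0 (⨅ i : Fin n, (hammingNorm (U i) : ℝ)⁻¹) := by
    ext t
    simp only [Set.mem_ofPred_eq, Set.mem_Icc, pimsnerPopaBound_iff hU,
      le_ciInf_iff (Finite.bddBelow_range _), ← one_div, le_div_iff₀ (hpos _)]
  change sSup {t : ℝ | 0 ≤ t ∧ PimsnerPopaBound U t} = _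
  simp only [hcard]
  rw [hset, csSup_Icc (le_ciInf fun i => (inv_pos.mpr (hpos i)).le)]
end

section
/- Let $U_1, U_2 \in M_n(\mathbb{C})$ be unitaries and $V = U_1^* U_2$. Suppose there exists $\varepsilon > 0$ such that for all positive semidefinite $x \in M_n(\mathbb{C})$, $U_2^* x U_2 \ge 2\varepsilon\, U_1^* x U_1$ and $U_1^* x U_1 \ge 2\varepsilon\, U_2^* x U_2$ (in the Loewner order). Then $V$ is a diagonal matrix. -/
/-!
Test the second inequality on the rank-one projection `x = U₁ Eᵢᵢ U₁*`. Then `U₁* x U₁ = Eᵢᵢ`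
and `U₂* x U₂ = V* Eᵢᵢ V`, so `Eᵢᵢ - 2ε V* Eᵢᵢ V` is positive semidefinite. For `j ≠ i` its
`(j, j)` entry is `-2ε |V i j|²`, which can only be nonnegative if `V i j = 0`.
-/

open Matrix
open scoped ComplexOrder

namespace Matrix

variable {𝕜 n : Type*} [RCLike 𝕜] [DecidableEq n]

lemma posSemidef_single_one (i : n) : (single i i (1 : 𝕜)).PosSemidef := by
  rw [← diagonal_single]
  exact .diagonal (Pi.single_nonneg.mpr zero_le_one)

variable [Fintype n]

lemma conjTranspose_mul_single_mul_apply (B : Matrix n n 𝕜) (i j k : n) (c : 𝕜) :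
    (Bᴴ * single i i c * B) j k = star (B i j) * c * B i k := by
  rw [mul_apply, Finset.sum_eq_single i (fun l _ hl => by simp [hl]) (by simp)]
  simp

lemma eq_zero_of_posSemidef_single_sub_smul {B : Matrix n n 𝕜} {c : ℝ} (hc : 0 < c) {i j : n}
    (hij : i ≠ j) (h : (single i i 1 - c • (Bᴴ * single i i 1 * B)).PosSemidef) :
    B i j = 0 := by
  have hjj := h.diag_nonneg (i := j)
  rw [sub_apply, smul_apply, conjTranspose_mul_single_mul_apply, single_apply_of_row_ne hij,
    mul_one, RCLike.star_def, RCLike.conj_mul, zero_sub, neg_nonneg,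
    RCLike.real_smul_eq_coe_mul] at hjj
  norm_cast at hjj
  have : ‖B i j‖ ^ 2 ≤ 0 := nonpos_of_mul_nonpos_right hjj hc
  simpa using this

end Matrix

theorem stmt5_general {n : ℕ} (U₁ U₂ : Matrix (Fin n) (Fin n) ℂ)
    (h1 : U₁ᴴ * U₁ = 1) (ε : ℝ) (hε : 0 < ε)
    (h : ∀ x : Matrix (Fin n) (Fin n) ℂ, x.PosSemidef →
      (U₂ᴴ * x * U₂ - (2 * ε) • (U₁ᴴ * x * U₁)).PosSemidef ∧
      (U₁ᴴ * x * U₁ - (2 * ε) • (U₂ᴴ * x * U₂)).PosSemidef) :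
    ∀ i j, i ≠ j → (U₁ᴴ * U₂) i j = 0 := by
  intro i j hij
  set x := U₁ * single i i 1 * U₁ᴴ
  have hx : x.PosSemidef := (posSemidef_single_one i).mul_mul_conjTranspose_same U₁
  have hx₁ : U₁ᴴ * x * U₁ = single i i 1 := by
    simp only [x, ← mul_assoc, h1, one_mul]
    rw [mul_assoc, h1, mul_one]
  have hx₂ : U₂ᴴ * x * U₂ = (U₁ᴴ * U₂)ᴴ * single i i 1 * (U₁ᴴ * U₂) := by
    simp only [x, conjTranspose_mul, conjTranspose_conjTranspose, mul_assoc]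
  have hineq := (h x hx).2
  rw [hx₁, hx₂] at hineq
  exact eq_zero_of_posSemidef_single_sub_smul (by positivity) hij hineq

/-- If for some `ε > 0` and all positive semidefinite `x` one has
`U₂* x U₂ ≥ 2ε U₁* x U₁` and `U₁* x U₁ ≥ 2ε U₂* x U₂` (Loewner order), then
`V = U₁* U₂` is diagonal. -/
theorem stmt5 {n : ℕ} (U₁ U₂ : Matrix (Fin n) (Fin n) ℂ)
    (h1 : U₁ᴴ * U₁ = 1) (h2 : U₂ᴴ * U₂ = 1) (ε : ℝ) (hε : 0 < ε)
    (h : ∀ x : Matrix (Fin n) (Fin n) ℂ, x.PosSemidef →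
      (U₂ᴴ * x * U₂ - (2 * ε) • (U₁ᴴ * x * U₁)).PosSemidef ∧
      (U₁ᴴ * x * U₁ - (2 * ε) • (U₂ᴴ * x * U₂)).PosSemidef) :
    ∀ i j, i ≠ j → (U₁ᴴ * U₂) i j = 0 :=
  stmt5_general U₁ U₂ h1 ε hε h
end

section
/- Let $u = u(a)$, $v = u(b)$ be as above with $\theta = \bar a b$, $\theta \ne \pm 1$. Then the intersection $(u\Delta_4 u^*) \cap (v\Delta_4 v^*)$ equals $u\,\{\mathrm{diag}(\mu_1,\mu_2,\mu_3,\mu_2) : \mu_1,\mu_2,\mu_3 \in \mathbb{C}\}\,u^*$, a three-dimensional abelian subalgebra of $M_4(\mathbb{C})$. Equivalently, $\Delta_4 \cap (u^*v)\Delta_4(u^*v)^* = \{\mathrm{diag}(\mu_1,\mu_2,\mu_3,\mu_2)\}$. -/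
/-!
Conjugation by `w = u(a)ᴴ u(b) = p + q(θ)` fixes `e₀, e₂` and acts on `span(e₁, e₃)` by
`½ [[1 + θ, 1 - θ], [1 - θ, 1 + θ]]`. For `|θ| = 1` the `(1, 3)` entry of `w diag(e) wᴴ` is
`(θ - θ̄)(e₁ - e₃)/4`, so `w diag(e) wᴴ` is diagonal only if `e₁ = e₃`, and then it equals
`diag(e)`. Conjugating back by the unitary `u(a)` gives the first equality.
-/

open Matrix

namespace Matrix

variable {n α : Type*} [Fintype n] [DecidableEq n] [CommRing α] [StarRing α]
  {u v A X : Matrix n n α}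

theorem eq_conj_iff_conj_eq (hu : u ∈ unitaryGroup n α) :
    A = u * X * uᴴ ↔ uᴴ * A * u = X := by
  have h₁ : uᴴ * u = 1 := Unitary.star_mul_self_of_mem hu
  have h₂ : u * uᴴ = 1 := Unitary.mul_star_self_of_mem hu
  constructor
  · rintro rfl
    simp only [Matrix.mul_assoc, Matrix.mul_one, ← Matrix.mul_assoc uᴴ u, h₁, Matrix.one_mul]
  · rintro rfl
    simp only [Matrix.mul_assoc, Matrix.mul_one, ← Matrix.mul_assoc u uᴴ, h₂, Matrix.one_mul]

theorem eq_conj_iff_conj_eq_conj_conjTranspose_mul (hu : u ∈ unitaryGroup n α) :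
    A = v * X * vᴴ ↔ uᴴ * A * u = uᴴ * v * X * (uᴴ * v)ᴴ := by
  have h₂ : u * uᴴ = 1 := Unitary.mul_star_self_of_mem hu
  rw [← eq_conj_iff_conj_eq hu, conjTranspose_mul, conjTranspose_conjTranspose]
  simp only [← Matrix.mul_assoc, h₂, Matrix.one_mul]
  simp only [Matrix.mul_assoc, h₂, Matrix.mul_one]

end Matrix

theorem ne_star_of_mul_star_eq_one {R : Type*} [CommRing R] [NoZeroDivisors R] [Star R] {z : R}
    (h : z * star z = 1) (h₁ : z ≠ 1) (h₂ : z ≠ -1) : z ≠ star z := by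
  intro hz
  rw [← hz] at h
  have : (z - 1) * (z + 1) = 0 := by linear_combination h
  rcases mul_eq_zero.1 this with h' | h'
  · exact h₁ (sub_eq_zero.1 h')
  · exact h₂ (eq_neg_of_add_eq_zero_left h')

noncomputable def hadamardFamily (a : ℂ) : Matrix (Fin 4) (Fin 4) ℂ :=
  (1/2 : ℂ) • !![1, 1, 1, 1;
    1, Complex.I * a, -1, -(Complex.I * a);
    1, -1, 1, -1;
    1, -(Complex.I * a), -1, Complex.I * a]

/-- The matrix `p + q(θ)` of the paper. -/
noncomputable def hadamardTransition (θ : ℂ) : Matrix (Fin 4) (Fin 4) ℂ :=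
  !![1, 0, 0, 0;
    0, (1 + θ) / 2, 0, (1 - θ) / 2;
    0, 0, 1, 0;
    0, (1 - θ) / 2, 0, (1 + θ) / 2]

theorem hadamardFamily_conjTranspose_mul (a b : ℂ) :
    (hadamardFamily a)ᴴ * hadamardFamily b = hadamardTransition (star a * b) := by
  ext i j
  fin_cases i <;> fin_cases j <;>
    simp [hadamardFamily, hadamardTransition, mul_apply, Fin.sum_univ_four, conjTranspose_apply,
      Complex.conj_I, map_ofNat]
  all_goals ring_nf
  all_goals simp only [Complex.I_sq]
  all_goals ring

theorem hadamardTransition_one : hadamardTransition 1 = 1 := by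
  ext i j
  fin_cases i <;> fin_cases j <;> norm_num [hadamardTransition]

theorem hadamardFamily_mem_unitaryGroup {a : ℂ} (ha : star a * a = 1) :
    hadamardFamily a ∈ unitaryGroup (Fin 4) ℂ := by
  rw [mem_unitaryGroup_iff', star_eq_conjTranspose, hadamardFamily_conjTranspose_mul, ha,
    hadamardTransition_one]

theorem hadamardTransition_conj_diagonal (θ : ℂ) (e : Fin 4 → ℂ) :
    hadamardTransition θ * diagonal e * (hadamardTransition θ)ᴴ =
    !![e 0, 0, 0, 0;
       0, ((1 + θ) * (1 + star θ) * e 1 + (1 - θ) * (1 - star θ) * e 3) / 4, 0,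
          ((1 + θ) * (1 - star θ) * e 1 + (1 - θ) * (1 + star θ) * e 3) / 4;
       0, 0, e 2, 0;
       0, ((1 - θ) * (1 + star θ) * e 1 + (1 + θ) * (1 - star θ) * e 3) / 4, 0,
          ((1 - θ) * (1 - star θ) * e 1 + (1 + θ) * (1 + star θ) * e 3) / 4] := by
  ext i j
  fin_cases i <;> fin_cases j <;>
    simp [hadamardTransition, mul_apply, Fin.sum_univ_four, conjTranspose_apply, diagonal_apply,
      vecMul, dotProduct, map_ofNat]
  all_goals ring

section

variable {θ : ℂ} {e : Fin 4 → ℂ} (hθ : θ * star θ = 1)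
include hθ

theorem hadamardTransition_conj_diagonal_of_eq (he : e 1 = e 3) :
    hadamardTransition θ * diagonal e * (hadamardTransition θ)ᴴ = diagonal e := by
  rw [hadamardTransition_conj_diagonal, Complex.star_def]
  rw [Complex.star_def] at hθ
  ext i j
  fin_cases i <;> fin_cases j <;> simp [he]
  all_goals first
    | linear_combination (e 3 / 2) * hθ
    | linear_combination (-2 * e 3) * hθ

theorem eq_of_hadamardTransition_conj_diagonal_apply (hne : θ ≠ star θ)
    (h : (hadamardTransition θ * diagonal e * (hadamardTransition θ)ᴴ) 1 3 = 0) :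
    e 1 = e 3 := by
  rw [hadamardTransition_conj_diagonal] at h
  simp only [RCLike.star_def, of_apply, cons_val', cons_val, cons_val_fin_one, cons_val_one,
    cons_val_zero, div_eq_zero_iff, OfNat.ofNat_ne_zero, or_false] at h
  have : (θ - star θ) * (e 1 - e 3) = 0 := by
    rw [Complex.star_def] at hθ ⊢
    linear_combination h + (e 1 + e 3) * hθ
  exact sub_eq_zero.1 ((mul_eq_zero.1 this).resolve_left (sub_ne_zero.2 hne))

theorem diagonal_inter_hadamardTransition_conj_diagonal (hne : θ ≠ star θ) :
    {A : Matrix (Fin 4) (Fin 4) ℂ | ∃ d : Fin 4 → ℂ, A = diagonal d} ∩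
        {A | ∃ d : Fin 4 → ℂ, A = hadamardTransition θ * diagonal d * (hadamardTransition θ)ᴴ}
      = {A | ∃ μ₁ μ₂ μ₃ : ℂ, A = diagonal ![μ₁, μ₂, μ₃, μ₂]} := by
  ext A
  constructor
  · rintro ⟨⟨d, rfl⟩, e, he⟩
    have he₁₃ : e 1 = e 3 :=
      eq_of_hadamardTransition_conj_diagonal_apply hθ hne (by rw [← he]; simp)
    rw [hadamardTransition_conj_diagonal_of_eq hθ he₁₃] at he
    refine ⟨e 0, e 1, e 2, he.trans (congrArg diagonal ?_)⟩
    ext i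
    fin_cases i <;> simp [he₁₃]
  · rintro ⟨μ₁, μ₂, μ₃, rfl⟩
    exact ⟨⟨_, rfl⟩, _, (hadamardTransition_conj_diagonal_of_eq hθ rfl).symm⟩

end

/-- For the inequivalent `4×4` Hadamard matrices `u = u(a)`, `v = u(b)` with
`θ = ā b ≠ ±1`: `(uΔ₄u*) ∩ (vΔ₄v*) = u {diag(μ₁,μ₂,μ₃,μ₂)} u*`; equivalently
`Δ₄ ∩ (u*v)Δ₄(u*v)* = {diag(μ₁,μ₂,μ₃,μ₂)}`. -/
theorem stmt15 (a b : ℂ) (ha : ‖a‖ = 1) (hb : ‖b‖ = 1)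
    (hθ1 : star a * b ≠ 1) (hθ2 : star a * b ≠ -1)
    (u v : Matrix (Fin 4) (Fin 4) ℂ)
    (hu : u = (1/2 : ℂ) • !![1, 1, 1, 1;
        1, Complex.I * a, -1, -(Complex.I * a);
        1, -1, 1, -1;
        1, -(Complex.I * a), -1, Complex.I * a])
    (hv : v = (1/2 : ℂ) • !![1, 1, 1, 1;
        1, Complex.I * b, -1, -(Complex.I * b);
        1, -1, 1, -1;
        1, -(Complex.I * b), -1, Complex.I * b]) :
    ({A : Matrix (Fin 4) (Fin 4) ℂ | ∃ d : Fin 4 → ℂ, A = u * Matrix.diagonal d * uᴴ} ∩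
        {A : Matrix (Fin 4) (Fin 4) ℂ | ∃ d : Fin 4 → ℂ, A = v * Matrix.diagonal d * vᴴ}
      = {A : Matrix (Fin 4) (Fin 4) ℂ | ∃ μ₁ μ₂ μ₃ : ℂ,
          A = u * Matrix.diagonal (![μ₁, μ₂, μ₃, μ₂] : Fin 4 → ℂ) * uᴴ}) ∧
    ({A : Matrix (Fin 4) (Fin 4) ℂ | ∃ d : Fin 4 → ℂ, A = Matrix.diagonal d} ∩
        {A : Matrix (Fin 4) (Fin 4) ℂ | ∃ d : Fin 4 → ℂ,
          A = (uᴴ * v) * Matrix.diagonal d * (uᴴ * v)ᴴ}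
      = {A : Matrix (Fin 4) (Fin 4) ℂ | ∃ μ₁ μ₂ μ₃ : ℂ,
          A = Matrix.diagonal (![μ₁, μ₂, μ₃, μ₂] : Fin 4 → ℂ)}) := by
  obtain rfl : u = hadamardFamily a := hu
  obtain rfl : v = hadamardFamily b := hv
  set θ := star a * b
  have hθ : θ * star θ = 1 := by
    rw [Complex.star_def, Complex.mul_conj', norm_mul, norm_star, ha, hb]; norm_num
  have hne : θ ≠ star θ := ne_star_of_mul_star_eq_one hθ hθ1 hθ2
  have ha' : star a * a = 1 := by
    rw [Complex.star_def, mul_comm, Complex.mul_conj', ha]; norm_num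
  have hu := hadamardFamily_mem_unitaryGroup ha'
  have hdiag := diagonal_inter_hadamardTransition_conj_diagonal hθ hne
  rw [← hadamardFamily_conjTranspose_mul] at hdiag
  refine ⟨?_, hdiag⟩
  ext A
  have := Set.ext_iff.mp hdiag ((hadamardFamily a)ᴴ * A * hadamardFamily a)
  simp only [Set.mem_inter_iff, Set.mem_ofPred_eq] at this ⊢
  simp only [eq_conj_iff_conj_eq hu]
  simp only [eq_conj_iff_conj_eq_conj_conjTranspose_mul (v := hadamardFamily b) hu]
  simpa only [eq_comm] using this
end

section
/- Consider a commuting cube of finite von Neumann algebras: $C_0 \subset B_0^1, B_0^2 \subset A_0$ on the bottom and $C_1 \subset B_1^1, B_1^2 \subset A_1$ on top, with compatible inclusions, such that the adjacent faces $(B_0^j \subset A_0, B_1^j \subset A_1)$, $j=1,2$, are commuting squares, and the roof $(C_1 \subset B_1^1, B_1^2 \subset A_1)$ is a commuting square. Then the floor $(C_0 \subset B_0^1, B_0^2 \subset A_0)$ is also a commuting square; i.e., $E_{B_0^2}(B_0^1) \subseteq C_0$. -/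
/-- In a commuting cube (the adjacent faces `(B₀ʲ ⊂ A₀, B₁ʲ ⊂ A₁)` are commuting
squares), if the roof `(C₁ ⊂ B₁¹, B₁² ⊂ A₁)` is a commuting square, then the
floor `(C₀ ⊂ B₀¹, B₀² ⊂ A₀)` is a commuting square as well:
`E_{B₀²}(B₀¹) ⊆ C₀ = B₀¹ ∩ B₀²`. -/
theorem stmt17 {n : ℕ}
    (A₀ B₀₁ B₀₂ B₁₁ B₁₂ : StarSubalgebra ℂ (Matrix (Fin n) (Fin n) ℂ))
    (hB₀₁A : B₀₁ ≤ A₀) (hB₀₂A : B₀₂ ≤ A₀)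
    (hB₀₁B : B₀₁ ≤ B₁₁) (hB₀₂B : B₀₂ ≤ B₁₂)
    (EA₀ EB₁₁ EB₁₂ EB₀₁ EB₀₂ EC₁ :
      Matrix (Fin n) (Fin n) ℂ →ₗ[ℂ] Matrix (Fin n) (Fin n) ℂ)
    (hEA₀mem : ∀ x, EA₀ x ∈ A₀) (hEA₀id : ∀ x ∈ A₀, EA₀ x = x)
    (hEB₁₁mem : ∀ x, EB₁₁ x ∈ B₁₁) (hEB₁₁id : ∀ x ∈ B₁₁, EB₁₁ x = x)
    (hEB₁₂mem : ∀ x, EB₁₂ x ∈ B₁₂) (hEB₁₂id : ∀ x ∈ B₁₂, EB₁₂ x = x)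
    (hEB₀₁mem : ∀ x, EB₀₁ x ∈ B₀₁) (hEB₀₁id : ∀ x ∈ B₀₁, EB₀₁ x = x)
    (hEB₀₂mem : ∀ x, EB₀₂ x ∈ B₀₂) (hEB₀₂id : ∀ x ∈ B₀₂, EB₀₂ x = x)
    (hEC₁mem : ∀ x, EC₁ x ∈ B₁₁ ∧ EC₁ x ∈ B₁₂)
    (hEC₁id : ∀ x, x ∈ B₁₁ → x ∈ B₁₂ → EC₁ x = x)
    (hface₁ : EB₁₁ ∘ₗ EA₀ = EB₀₁) (hface₁' : EA₀ ∘ₗ EB₁₁ = EB₀₁)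
    (hface₂ : EB₁₂ ∘ₗ EA₀ = EB₀₂) (hface₂' : EA₀ ∘ₗ EB₁₂ = EB₀₂)
    (hroof : EB₁₁ ∘ₗ EB₁₂ = EC₁) (hroof' : EB₁₂ ∘ₗ EB₁₁ = EC₁) :
    ∀ x ∈ B₀₁, EB₀₂ x ∈ B₀₁ ∧ EB₀₂ x ∈ B₀₂ := by
  intro x hx
  refine ⟨?_, hEB₀₂mem x⟩
  have hx1 : x ∈ B₁₁ := hB₀₁B hx
  have h1 : EB₁₂ x = EC₁ x := by
    have := LinearMap.congr_fun hroof' x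
    simpa [hEB₁₁id x hx1] using this
  have h2 : EB₀₂ x = EA₀ (EC₁ x) := by
    have := LinearMap.congr_fun hface₂' x
    simp only [LinearMap.coe_comp, Function.comp_apply] at this
    rw [← this, h1]
  have h3 : EB₁₁ (EC₁ x) = EC₁ x := hEB₁₁id _ (hEC₁mem x).1
  have h4 : EA₀ (EC₁ x) = EB₀₁ (EC₁ x) := by
    have := LinearMap.congr_fun hface₁' (EC₁ x)
    simp only [LinearMap.coe_comp, Function.comp_apply, h3] at this
    exact this
  rw [h2, h4]
  exact hEB₀₁mem _
end

section
/- Let $u = \tfrac{1}{\sqrt 2}\begin{pmatrix}1&1\\ e^{i\alpha}&-e^{i\alpha}\end{pmatrix}$ and $v = \tfrac{1}{\sqrt 2}\begin{pmatrix}1&1\\ e^{i\beta}&-e^{i\beta}\end{pmatrix}$, and let $E_{\Delta}: M_2(\mathbb{C}) \to \Delta_2$ be the diagonal conditional expectation, $w = u^* v$. Define $c = |w_{11}|^4 + |w_{12}|^4$. Then for any $A = (a_{ij}) \in M_2(\mathbb{C})$: $E_{\Delta}E_{w\Delta w^*}E_{\Delta}(A) = \mathrm{diag}(c\,a_{11}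 + (1-c)a_{22},\; (1-c)a_{11} + c\,a_{22})$, and $2c - 1 = \cos^2(\alpha - \beta)$. Consequently the nonzero spectrum of the operator $E_{\Delta}E_{w\Delta w^*}E_{\Delta} - \mathrm{tr}(\cdot)I_2$ on $M_2(\mathbb{C})$ is $\{\cos^2(\alpha-\beta)\}$ (when $\cos(\alpha-\beta) \ne 0$). -/
open Matrix Complex

/-!
Write `w = u* v` and `p_{jk} = |w_{jk}|²`. On a diagonal matrix `diag d`, `E_Δ ∘ Ad_{w*}` acts by
`d ↦ pᵀ d` and `E_Δ ∘ Ad_w` by `d ↦ p d`, so `E_Δ E_{wΔw*} E_Δ` is multiplication of the diagonal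
by the matrix `p pᵀ`. Here `w = ½ [[1 + z, 1 - z], [1 - z, 1 + z]]` with `z = e^{i(β-α)}`, so
`p = ½ [[1 + x, 1 - x], [1 - x, 1 + x]]` with `x = cos(α - β)`, and `p pᵀ` has diagonal entries
`c = (1 + x²)/2` and off-diagonal entries `1 - c`. Subtracting the trace part leaves the rank-one
map `A ↦ (x²/2)(a₁₁ - a₂₂) · diag(1, -1)`, whose only nonzero eigenvalue is `x²`.
-/

section DiagonalCompression

variable {n : Type*} [Fintype n] [DecidableEq n]

theorem mul_diagonal_mul_conjTranspose_apply_self (w : Matrix n n ℂ) (d : n → ℂ) (j : n) :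
    (w * diagonal d * wᴴ) j j = ∑ k, (normSq (w j k) : ℂ) * d k := by
  simp only [mul_apply, diagonal_apply, mul_ite, mul_zero, Finset.sum_ite_eq',
    Finset.mem_univ, if_true, conjTranspose_apply, RCLike.star_def]
  refine Finset.sum_congr rfl fun k _ => ?_
  rw [← mul_conj]
  ring

theorem conjTranspose_mul_diagonal_mul_apply_self (w : Matrix n n ℂ) (d : n → ℂ) (k : n) :
    (wᴴ * diagonal d * w) k k = ∑ i, (normSq (w i k) : ℂ) * d i := by
  simpa using mul_diagonal_mul_conjTranspose_apply_self wᴴ d k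

theorem diagonal_diag_conj_diagonal_diag (w A : Matrix n n ℂ) :
    diagonal (fun j => (w * diagonal (fun k => (wᴴ * diagonal (fun i => A i i) * w) k k)
        * wᴴ) j j) =
      diagonal fun j => ∑ i, ((∑ k, normSq (w j k) * normSq (w i k) : ℝ) : ℂ) * A i i := by
  simp only [mul_diagonal_mul_conjTranspose_apply_self,
    conjTranspose_mul_diagonal_mul_apply_self, Finset.mul_sum, Finset.sum_mul, ofReal_sum,
    ofReal_mul]
  congr 1
  funext j
  rw [Finset.sum_comm]
  simp only [mul_assoc]

end DiagonalCompression

theorem Module.End.spectrum_diff_zero_of_forall_apply_eq_smul {K V : Type*} [Field K]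
    [AddCommGroup V] [Module K V] [FiniteDimensional K V] (T : Module.End K V) (φ : V → K)
    (v : V) (μ : K) (hT : ∀ x, T x = φ x • v) (hv : v ≠ 0) (hφv : φ v = μ) (hμ : μ ≠ 0) :
    spectrum K T \ {0} = {μ} := by
  subst hφv
  have hTv : T v = φ v • v := hT v
  ext ν
  simp only [Set.mem_sdiff, Set.mem_singleton_iff]
  constructor
  · rintro ⟨hν, hν0⟩
    obtain ⟨x, hx⟩ := (Module.End.HasEigenvalue.of_mem_spectrum hν).exists_hasEigenvector
    have hTx : T x = ν • x := Module.End.mem_eigenspace_iff.mp hx.1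
    have hTx0 : T x ≠ 0 := hTx ▸ smul_ne_zero hν0 hx.2
    have h₁ : T (T x) = φ v • T x := by rw [hT x, map_smul, hTv, smul_comm]
    have h₂ : T (T x) = ν • T x := by rw [hTx, map_smul, hTx]
    exact smul_left_injective K hTx0 (h₂.symm.trans h₁)
  · rintro rfl
    exact ⟨Module.End.hasEigenvalue_iff_mem_spectrum.mp
      (Module.End.hasEigenvalue_of_hasEigenvector ⟨Module.End.mem_eigenspace_iff.mpr hTv, hv⟩),
      hμ⟩

noncomputable def phaseHadamard (α : ℝ) : Matrix (Fin 2) (Fin 2) ℂ :=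
  (Real.sqrt 2 : ℂ)⁻¹ • !![1, 1; exp (α * I), -exp (α * I)]

theorem phaseHadamard_conjTranspose_mul (α β : ℝ) :
    (phaseHadamard α)ᴴ * phaseHadamard β =
      !![(1 + exp ((β - α : ℝ) * I)) / 2, (1 - exp ((β - α : ℝ) * I)) / 2;
        (1 - exp ((β - α : ℝ) * I)) / 2, (1 + exp ((β - α : ℝ) * I)) / 2] := by
  have hsqrt : ((Real.sqrt 2 : ℂ))⁻¹ * (Real.sqrt 2 : ℂ)⁻¹ = 1 / 2 := by
    rw [← mul_inv, ← ofReal_mul, Real.mul_self_sqrt zero_le_two]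
    norm_num
  have hphase : (starRingEnd ℂ) (exp (α * I)) * exp (β * I) = exp ((β - α : ℝ) * I) := by
    rw [← exp_conj, ← exp_add]
    congr 1
    simp only [map_mul, conj_ofReal, conj_I, ofReal_sub]
    ring
  simp only [phaseHadamard, conjTranspose_smul, Matrix.smul_mul, Matrix.mul_smul, smul_smul,
    star_inv₀, RCLike.star_def, conj_ofReal, hsqrt]
  ext i j
  fin_cases i <;> fin_cases j <;>
    simp only [Fin.zero_eta, Fin.mk_one, Fin.isValue, Matrix.smul_apply, mul_apply,
      conjTranspose_apply, of_apply, cons_val', cons_val_zero, cons_val_one, cons_val_fin_one,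
      RCLike.star_def, Fin.sum_univ_two, map_one, map_neg, mul_one, mul_neg, neg_mul, neg_neg,
      hphase, smul_eq_mul] <;>
    ring

theorem normSq_one_add_exp_mul_I_div_two (θ : ℝ) :
    normSq ((1 + exp (θ * I)) / 2) = (1 + Real.cos θ) / 2 := by
  rw [normSq_div, normSq_apply, normSq_ofNat]
  simp only [add_re, one_re, exp_ofReal_mul_I_re, add_im, one_im, exp_ofReal_mul_I_im, zero_add]
  nlinarith [Real.sin_sq_add_cos_sq θ]

theorem normSq_one_sub_exp_mul_I_div_two (θ : ℝ) :
    normSq ((1 - exp (θ * I)) / 2) = (1 - Real.cos θ) / 2 := by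
  rw [normSq_div, normSq_apply, normSq_ofNat]
  simp only [sub_re, one_re, exp_ofReal_mul_I_re, sub_im, one_im, exp_ofReal_mul_I_im, zero_sub,
    mul_neg, neg_mul, neg_neg]
  nlinarith [Real.sin_sq_add_cos_sq θ]

theorem normSq_phaseHadamard_conjTranspose_mul_apply (α β : ℝ) (i k : Fin 2) :
    normSq (((phaseHadamard α)ᴴ * phaseHadamard β) i k) =
      (1 + (if i = k then 1 else -1) * Real.cos (α - β)) / 2 := by
  rw [phaseHadamard_conjTranspose_mul, ← Real.cos_neg, neg_sub]
  fin_cases i <;> fin_cases k <;>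
    simp only [Fin.zero_eta, Fin.mk_one, of_apply, cons_val', cons_val_zero, cons_val_one,
      empty_val', cons_val_fin_one, normSq_one_add_exp_mul_I_div_two,
      normSq_one_sub_exp_mul_I_div_two] <;>
    norm_num [sub_eq_add_neg]

theorem sum_normSq_mul_normSq_phaseHadamard_conjTranspose_mul (α β : ℝ) (i j : Fin 2) :
    ∑ k, normSq (((phaseHadamard α)ᴴ * phaseHadamard β) j k) *
        normSq (((phaseHadamard α)ᴴ * phaseHadamard β) i k) =
      (1 + (if i = j then 1 else -1) * Real.cos (α - β) ^ 2) / 2 := by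
  simp only [Fin.sum_univ_two, normSq_phaseHadamard_conjTranspose_mul_apply]
  fin_cases i <;> fin_cases j <;>
    simp only [Fin.zero_eta, Fin.mk_one, Fin.isValue, if_true, zero_ne_one, one_ne_zero,
      if_false] <;>
    ring

/-- For `w = u* v` and `c = |w₁₁|⁴ + |w₁₂|⁴`:
`E_Δ E_{wΔw*} E_Δ (A) = diag(c a₁₁ + (1-c) a₂₂, (1-c) a₁₁ + c a₂₂)`,
`2c - 1 = cos²(α - β)`, and the nonzero spectrum of
`E_Δ E_{wΔw*} E_Δ - tr(·) I₂` is `{cos²(α-β)}` when `cos(α-β) ≠ 0`. -/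
theorem stmt18 (α β : ℝ) (u v w : Matrix (Fin 2) (Fin 2) ℂ)
    (hu : u = (Real.sqrt 2 : ℂ)⁻¹ •
        !![1, 1; Complex.exp (α * Complex.I), -Complex.exp (α * Complex.I)])
    (hv : v = (Real.sqrt 2 : ℂ)⁻¹ •
        !![1, 1; Complex.exp (β * Complex.I), -Complex.exp (β * Complex.I)])
    (hw : w = uᴴ * v)
    (c : ℝ) (hc : c = ‖w 0 0‖ ^ 4 + ‖w 0 1‖ ^ 4)
    (EΔ : Matrix (Fin 2) (Fin 2) ℂ → Matrix (Fin 2) (Fin 2) ℂ)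
    (hEΔ : ∀ A, EΔ A = Matrix.diagonal fun i => A i i)
    (T : Module.End ℂ (Matrix (Fin 2) (Fin 2) ℂ))
    (hT : ∀ A, T A = EΔ (w * EΔ (wᴴ * EΔ A * w) * wᴴ)
        - (Matrix.trace A / 2) • (1 : Matrix (Fin 2) (Fin 2) ℂ)) :
    (∀ A : Matrix (Fin 2) (Fin 2) ℂ,
        EΔ (w * EΔ (wᴴ * EΔ A * w) * wᴴ)
          = Matrix.diagonal (![(c : ℂ) * A 0 0 + (1 - (c : ℂ)) * A 1 1,
              (1 - (c : ℂ)) * A 0 0 + (c : ℂ) * A 1 1] : Fin 2 → ℂ)) ∧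
    2 * c - 1 = Real.cos (α - β) ^ 2 ∧
    (Real.cos (α - β) ≠ 0 →
      spectrum ℂ T \ {0} = {((Real.cos (α - β) : ℂ)) ^ 2}) := by
  have hw' : w = (phaseHadamard α)ᴴ * phaseHadamard β := by rw [hw, hu, hv]; rfl
  have hc' : c = (1 + Real.cos (α - β) ^ 2) / 2 := by
    have hnorm (z : ℂ) : ‖z‖ ^ 4 = normSq z ^ 2 := by rw [← Complex.sq_norm]; ring
    rw [hc, hw', hnorm, hnorm, normSq_phaseHadamard_conjTranspose_mul_apply,
      normSq_phaseHadamard_conjTranspose_mul_apply]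
    norm_num
    ring
  have hcompress (A : Matrix (Fin 2) (Fin 2) ℂ) :
      EΔ (w * EΔ (wᴴ * EΔ A * w) * wᴴ) = diagonal ![(c : ℂ) * A 0 0 + (1 - (c : ℂ)) * A 1 1,
        (1 - (c : ℂ)) * A 0 0 + (c : ℂ) * A 1 1] := by
    simp only [hEΔ]
    rw [diagonal_diag_conj_diagonal_diag, hw']
    simp only [sum_normSq_mul_normSq_phaseHadamard_conjTranspose_mul, hc']
    congr 1
    funext j
    fin_cases j <;>
      simp only [Fin.zero_eta, Fin.mk_one, Fin.isValue, Fin.sum_univ_two, if_true, zero_ne_one,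
        one_ne_zero, if_false, cons_val_zero, cons_val_one, cons_val_fin_one] <;>
      push_cast <;>
      ring
  refine ⟨hcompress, by rw [hc']; ring, fun hcos => ?_⟩
  have hT' (A : Matrix (Fin 2) (Fin 2) ℂ) :
      T A = ((Real.cos (α - β) : ℂ) ^ 2 / 2 * (A 0 0 - A 1 1)) • !![1, 0; 0, -1] := by
    rw [hT, hcompress, hc']
    ext i j
    fin_cases i <;> fin_cases j <;>
      simp only [Fin.zero_eta, Fin.mk_one, Fin.isValue, trace_fin_two, Matrix.sub_apply,
        Matrix.smul_apply, diagonal_apply_eq, diagonal_apply_ne, ne_eq, zero_ne_one, one_ne_zero,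
        not_false_eq_true, one_apply_eq, one_apply_ne, of_apply, cons_val', cons_val_zero,
        cons_val_one, cons_val_fin_one, smul_eq_mul] <;>
      push_cast <;>
      ring
  refine T.spectrum_diff_zero_of_forall_apply_eq_smul _ _ _ hT' ?_ ?_
    (pow_ne_zero 2 (ofReal_ne_zero.2 hcos))
  · exact fun h => by simpa using congrFun (congrFun h 0) 0
  · simp only [of_apply, cons_val', cons_val_zero, cons_val_one, cons_val_fin_one]
    ring
end
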